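/- arXiv:1207.3947 — 2 statements merged into one kernel-verified Lean document; each statement's English description precedes it below -/
import Mathlib

section
/- Set α^{(m)}_{k,L} := Σ_{l,l' ≥ 0, l+l' = L} α^{(m)}_{k,l,l'} for m, L ∈ ℤ_{≥0} and k ∈ ℤ. Then: (i) α^{(m)}_{k,L} = 0 unless L ≤ m, |k| ≤ m − L and m + k ≡ L (mod 2); (ii) α^{(m)}_{k,0} = 1 if k = m and 0 otherwise; (iii) if L is even with 2 ≤ L ≤ m, |k| ≤ m − L and m + k ≡ L (mod 2), then α^{(m)}_{k,L} = C((m+k)/2, (m+k−L)/2) · C((m−k−2)/2, (m−k−L)/2); (iv) if L is odd with L ≤ m, |k| ≤ m − L and m + k ≡ L (mod 2), then α^{(m)}_{k,L} = C((m+k−1)/2, (m+k−L)/2) · C((m−k−1)/2, (m−k−L)/2); here C(p,q) denotes the binomial coefficient. -/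
/-- The integers `α^{(m)}_{k,l,l'}`, defined by the recursion
`α^{(0)}_{k,l,l'} = δ_{k,0}δ_{l,0}δ_{l',0}`,
`α^{(m+1)}_{k,l,l'} = α^{(m)}_{k-1,l',l} + α^{(m)}_{-k,l',l-1}`, with `α^{(m)}_{k,l,l'} = 0`
whenever `l < 0` or `l' < 0`. -/
def alternatingAlpha : ℕ → ℤ → ℤ → ℤ → ℤ
  | 0, k, l, l' => if k = 0 ∧ l = 0 ∧ l' = 0 then 1 else 0
  | m + 1, k, l, l' =>
      if l < 0 ∨ l' < 0 then 0
      else alternatingAlpha m (k - 1) l' l + alternatingAlpha m (-k) l' (l - 1)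

/-- `α^{(m)}_{k,L} = Σ_{l+l' = L} α^{(m)}_{k,l,l'}`. -/
def alternatingAlphaL (m : ℕ) (k : ℤ) (L : ℕ) : ℤ :=
  ∑ l ∈ Finset.range (L + 1), alternatingAlpha m k (l : ℤ) ((L - l : ℕ) : ℤ)

/-!
Summing the recursion over `l + l' = L` gives
`α^{(m+1)}_{k,L} = α^{(m)}_{k-1,L} + α^{(m)}_{-k,L-1}` (the second term absent for `L = 0`).
By induction, `α^{(m)}_{k,L}` vanishes unless `m = a + b + L` and `k = a - b` with `a, b ≥ 0`,
and in these coordinates the recursion reads `F(L, a+1, b) = F(L, a, b) + F(L-1, b, a+1)`.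
Pascal's rule for multisets shows that
`F(L, a, b) = multichoose (⌊L/2⌋ + 1) a * multichoose ⌈L/2⌉ b` solves it; writing
`multichoose n a = C(n + a - 1, a)` gives (ii), (iii) and (iv) at once.
-/

open Finset

lemma alternatingAlpha_eq_zero_of_neg (m : ℕ) (k l : ℤ) {l' : ℤ} (hl' : l' < 0) :
    alternatingAlpha m k l l' = 0 := by
  cases m with
  | zero => simp [alternatingAlpha, hl'.ne]
  | succ m => simp [alternatingAlpha, hl']

lemma alternatingAlpha_succ_natCast (m : ℕ) (k : ℤ) (l l' : ℕ) :
    alternatingAlpha (m + 1) k l l' =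
      alternatingAlpha m (k - 1) l' l + alternatingAlpha m (-k) l' (l - 1) := by
  simp [alternatingAlpha]

lemma alternatingAlphaL_eq_sum_antidiagonal (m : ℕ) (k : ℤ) (L : ℕ) :
    alternatingAlphaL m k L = ∑ p ∈ antidiagonal L, alternatingAlpha m k p.1 p.2 := by
  rw [alternatingAlphaL,
    Nat.sum_antidiagonal_eq_sum_range_succ (fun l l' => alternatingAlpha m k l l')]

lemma alternatingAlphaL_zero (k : ℤ) (L : ℕ) :
    alternatingAlphaL 0 k L = if k = 0 ∧ L = 0 then 1 else 0 := by
  cases L with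
  | zero => by_cases hk : k = 0 <;> simp [alternatingAlphaL, alternatingAlpha, hk]
  | succ L =>
    rw [if_neg (by omega)]
    refine sum_eq_zero fun l hl => ?_
    simp only [alternatingAlpha]
    grind

lemma alternatingAlphaL_succ_zero (m : ℕ) (k : ℤ) :
    alternatingAlphaL (m + 1) k 0 = alternatingAlphaL m (k - 1) 0 := by
  simp [alternatingAlphaL_eq_sum_antidiagonal, alternatingAlpha_succ_natCast,
    alternatingAlpha_eq_zero_of_neg]

lemma alternatingAlphaL_succ_succ (m : ℕ) (k : ℤ) (L : ℕ) :
    alternatingAlphaL (m + 1) k (L + 1) =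
      alternatingAlphaL m (k - 1) (L + 1) + alternatingAlphaL m (-k) L := by
  simp only [alternatingAlphaL_eq_sum_antidiagonal, alternatingAlpha_succ_natCast, sum_add_distrib]
  congr 1
  · exact Nat.sum_antidiagonal_swap (f := fun p => alternatingAlpha m (k - 1) p.1 p.2)
  · rw [Nat.sum_antidiagonal_succ, alternatingAlpha_eq_zero_of_neg _ _ _ (by norm_num), zero_add,
      ← Nat.sum_antidiagonal_swap]
    simp

lemma exists_eq_add_add_of_alternatingAlphaL_ne_zero {m : ℕ} {k : ℤ} {L : ℕ}
    (h : alternatingAlphaL m k L ≠ 0) : ∃ a b : ℕ, m = a + b + L ∧ k = a - b := by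
  induction m generalizing k L with
  | zero =>
    rw [alternatingAlphaL_zero] at h
    obtain ⟨rfl, rfl⟩ : k = 0 ∧ L = 0 := by by_contra hkL; simp [hkL] at h
    exact ⟨0, 0, rfl, rfl⟩
  | succ m ih =>
    cases L with
    | zero =>
      rw [alternatingAlphaL_succ_zero] at h
      obtain ⟨a, b, rfl, hk⟩ := ih h
      exact ⟨a + 1, b, by ring, by push_cast; omega⟩
    | succ L =>
      rw [alternatingAlphaL_succ_succ] at h
      by_cases h₁ : alternatingAlphaL m (k - 1) (L + 1) = 0
      · rw [h₁, zero_add] at h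
        obtain ⟨a, b, rfl, hk⟩ := ih h
        exact ⟨b, a, by ring, by omega⟩
      · obtain ⟨a, b, rfl, hk⟩ := ih h₁
        exact ⟨a + 1, b, by ring, by push_cast; omega⟩

lemma exists_nat_add_add_sub_iff (m L : ℕ) (k : ℤ) :
    (∃ a b : ℕ, m = a + b + L ∧ k = a - b) ↔
      L ≤ m ∧ |k| ≤ (m : ℤ) - L ∧ ((m : ℤ) + k - L) % 2 = 0 := by
  constructor
  · rintro ⟨a, b, rfl, rfl⟩
    exact ⟨by omega, abs_le.2 ⟨by push_cast; omega, by push_cast; omega⟩, by push_cast; omega⟩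
  · rintro ⟨hLm, hk, hpar⟩
    obtain ⟨hk₁, hk₂⟩ := abs_le.1 hk
    exact ⟨(((m : ℤ) + k - L) / 2).toNat, (((m : ℤ) - k - L) / 2).toNat, by omega, by omega⟩

lemma alternatingAlphaL_eq_zero_of_add_lt {m : ℕ} {k : ℤ} {L : ℕ} (hk : k + m < L) :
    alternatingAlphaL m k L = 0 := by
  by_contra h
  obtain ⟨a, b, rfl, rfl⟩ := exists_eq_add_add_of_alternatingAlphaL_ne_zero h
  push_cast at hk
  omega

lemma alternatingAlphaL_add_add_sub (a b L : ℕ) :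
    alternatingAlphaL (a + b + L) (a - b) L =
      ((L / 2 + 1).multichoose a * ((L + 1) / 2).multichoose b : ℕ) := by
  induction h : a + b + L generalizing a b L with
  | zero =>
    obtain ⟨rfl, rfl, rfl⟩ : a = 0 ∧ b = 0 ∧ L = 0 := by omega
    simp [alternatingAlphaL_zero]
  | succ m ih =>
    rcases a with _ | a <;> rcases L with _ | L
    · obtain rfl : b = m + 1 := by omega
      rw [alternatingAlphaL_succ_zero, alternatingAlphaL_eq_zero_of_add_lt (by push_cast; omega)]
      simp
    · rw [alternatingAlphaL_succ_succ, alternatingAlphaL_eq_zero_of_add_lt (by push_cast; omega),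
        zero_add, show -((0 : ℕ) - (b : ℤ)) = b - (0 : ℕ) by simp, ih b 0 L (by omega)]
      simp [show (L + 1 + 1) / 2 = L / 2 + 1 by omega]
    · rw [alternatingAlphaL_succ_zero, show ((a + 1 : ℕ) : ℤ) - b - 1 = a - b by push_cast; ring,
        ih a b 0 (by omega)]
      simp
    · rw [alternatingAlphaL_succ_succ, show ((a + 1 : ℕ) : ℤ) - b - 1 = a - b by push_cast; ring,
        show -(((a + 1 : ℕ) : ℤ) - b) = b - (a + 1 : ℕ) by ring, ih a b (L + 1) (by omega),
        ih b (a + 1) L (by omega), show (L + 1 + 1) / 2 = L / 2 + 1 by omega,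
        Nat.multichoose_succ_succ ((L + 1) / 2) a]
      push_cast
      ring

/-- The closed formulas for `α^{(m)}_{k,L}`:
(i) `α^{(m)}_{k,L} = 0` unless `L ≤ m`, `|k| ≤ m − L` and `m + k ≡ L (mod 2)`;
(ii) `α^{(m)}_{k,0} = 1` if `k = m` and `0` otherwise;
(iii) for even `L` with `2 ≤ L ≤ m`, `|k| ≤ m − L`, `m + k ≡ L (mod 2)`:
  `α^{(m)}_{k,L} = C((m+k)/2, (m+k−L)/2)·C((m−k−2)/2, (m−k−L)/2)`;
(iv) for odd `L ≤ m`, `|k| ≤ m − L`, `m + k ≡ L (mod 2)`: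
  `α^{(m)}_{k,L} = C((m+k−1)/2, (m+k−L)/2)·C((m−k−1)/2, (m−k−L)/2)`. -/
theorem alternatingAlphaL_closed_formula :
    (∀ (m L : ℕ) (k : ℤ), alternatingAlphaL m k L ≠ 0 →
      L ≤ m ∧ |k| ≤ (m : ℤ) - L ∧ ((m : ℤ) + k - L) % 2 = 0) ∧
    (∀ (m : ℕ) (k : ℤ), alternatingAlphaL m k 0 = if k = (m : ℤ) then 1 else 0) ∧
    (∀ (m L : ℕ) (k : ℤ), L % 2 = 0 → 2 ≤ L → L ≤ m → |k| ≤ (m : ℤ) - L →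
      ((m : ℤ) + k - L) % 2 = 0 →
      alternatingAlphaL m k L =
        (Nat.choose (((m : ℤ) + k) / 2).toNat ((((m : ℤ) + k - L)) / 2).toNat *
         Nat.choose (((m : ℤ) - k - 2) / 2).toNat ((((m : ℤ) - k - L)) / 2).toNat : ℕ)) ∧
    (∀ (m L : ℕ) (k : ℤ), L % 2 = 1 → L ≤ m → |k| ≤ (m : ℤ) - L →
      ((m : ℤ) + k - L) % 2 = 0 →
      alternatingAlphaL m k L =
        (Nat.choose (((m : ℤ) + k - 1) / 2).toNat ((((m : ℤ) + k - L)) / 2).toNat *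
         Nat.choose (((m : ℤ) - k - 1) / 2).toNat ((((m : ℤ) - k - L)) / 2).toNat : ℕ)) := by
  refine ⟨fun m L k h => ?support, fun m k => ?bottom, fun m L k _ _ hLm hk hpar => ?even,
    fun m L k _ hLm hk hpar => ?odd⟩
  case support =>
    exact (exists_nat_add_add_sub_iff m L k).1 (exists_eq_add_add_of_alternatingAlphaL_ne_zero h)
  case bottom =>
    split_ifs with hkm
    · simpa [hkm] using alternatingAlphaL_add_add_sub m 0 0
    · by_contra h
      obtain ⟨a, _ | b, rfl, rfl⟩ := exists_eq_add_add_of_alternatingAlphaL_ne_zero h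
      · simp at hkm
      · rw [alternatingAlphaL_add_add_sub] at h
        simp at h
  case even | odd =>
    obtain ⟨a, b, rfl, rfl⟩ := (exists_nat_add_add_sub_iff m L k).2 ⟨hLm, hk, hpar⟩
    rw [alternatingAlphaL_add_add_sub, Nat.multichoose_eq, Nat.multichoose_eq]
    congr 3 <;> omega
end

section
/- For every m ≥ 1 and every k with 1 ≤ k ≤ m and k ≡ m (mod 2), the following identity of polynomials in ℤ[β] holds: (m+k) · a_k^{(m)}(β,β) = 2k · Σ_{p=0}^{⌊(m−1)/2⌋} β^{2p} α^{(m)}_{k,2p}, where α^{(m)}_{k,L} := Σ_{l,l' ≥ 0, l+l' = L} α^{(m)}_{k,l,l'}. -/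
/-- The coefficient `a_k^{(m)}(β,β') = Σ_{l,l'≥0} β^l β'^{l'} (α^{(m)}_{k,l,l'} − α^{(m)}_{−k,l',l})`
(a finite sum). -/
noncomputable def aCoeff (R : Type*) [CommRing R] (m k : ℕ) (b b' : R) : R :=
  ∑ᶠ (l : ℕ) (l' : ℕ), b ^ l * b' ^ l' *
    ((alternatingAlpha m (k : ℤ) (l : ℤ) (l' : ℤ) -
      alternatingAlpha m (-(k : ℤ)) (l' : ℤ) (l : ℤ) : ℤ) : R)

open Finset

lemma Nat.add_mul_multichoose (n k : ℕ) :
    (n + k) * n.multichoose k = n * (n + 1).multichoose k := by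
  cases n with
  | zero => cases k <;> simp
  | succ n =>
    rw [Nat.multichoose_eq, Nat.multichoose_eq, show n + 1 + k - 1 = n + k by omega,
      show n + 1 + 1 + k - 1 = n + k + 1 by omega, mul_comm, add_right_comm,
      Nat.choose_mul_succ_eq, show n + k + 1 - k = n + 1 by omega, mul_comm]

lemma Finset.sum_range_two_mul {M : Type*} [AddCommMonoid M] (f : ℕ → M) (n : ℕ) :
    ∑ i ∈ range (2 * n), f i = ∑ i ∈ range n, (f (2 * i) + f (2 * i + 1)) := by
  induction n with
  | zero => simp
  | succ n ih =>
    rw [mul_add, mul_one, sum_range_succ, sum_range_succ, sum_range_succ, ih, add_assoc]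

lemma alternatingAlpha_of_neg {m : ℕ} {k l l' : ℤ} (h : l < 0 ∨ l' < 0) :
    alternatingAlpha m k l l' = 0 := by
  cases m with
  | zero => rw [alternatingAlpha, if_neg (by omega)]
  | succ m => rw [alternatingAlpha, if_pos h]

lemma alternatingAlpha_of_lt_add {m : ℕ} {k l l' : ℤ} (h : (m : ℤ) < l + l') :
    alternatingAlpha m k l l' = 0 := by
  induction m generalizing k l l' with
  | zero => rw [alternatingAlpha, if_neg (by omega)]
  | succ m ih =>
    rw [alternatingAlpha]
    split_ifs
    · rfl
    · rw [ih (by omega), ih (by omega), add_zero]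

lemma aCoeff_diag_eq_sum (R : Type*) [CommRing R] (m k : ℕ) (b : R) :
    aCoeff R m k b b = ∑ L ∈ range (m + 1),
      ((alternatingAlphaL m k L - alternatingAlphaL m (-k) L : ℤ) : R) * b ^ L := by
  set g : ℕ → ℕ → R := fun l l' => b ^ l * b ^ l' *
    ((alternatingAlpha m k l l' - alternatingAlpha m (-k) l' l : ℤ) : R)
  have hinner : ∀ l, ∑ᶠ l', g l l' = ∑ l' ∈ range (m + 1 - l), g l l' := by
    intro l
    refine finsum_eq_sum_of_support_subset _ fun l' hl' => ?_
    by_contra hlt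
    simp only [coe_range, Set.mem_Iio, not_lt] at hlt
    apply hl'
    simp only [g, alternatingAlpha_of_lt_add (by omega : (m : ℤ) < l + l'),
      alternatingAlpha_of_lt_add (by omega : (m : ℤ) < l' + l), sub_self, Int.cast_zero, mul_zero]
  have houter :
      aCoeff R m k b b = ∑ l ∈ range (m + 1), ∑ l' ∈ range (m + 1 - l), g l l' := by
    rw [aCoeff, finsum_congr hinner]
    refine finsum_eq_sum_of_support_subset _ fun l hl => ?_
    by_contra hlt
    simp only [coe_range, Set.mem_Iio, not_lt] at hlt
    exact hl (by simp [Nat.sub_eq_zero_of_le hlt])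
  rw [houter, ← sum_range_diag_flip]
  refine sum_congr rfl fun L _ => ?_
  rw [← Nat.sum_antidiagonal_eq_sum_range_succ g, alternatingAlphaL_eq_sum_antidiagonal,
    alternatingAlphaL_eq_sum_antidiagonal,
    ← Nat.sum_antidiagonal_swap (f := fun p => alternatingAlpha m (-k) p.1 p.2),
    ← sum_sub_distrib, Int.cast_sum, sum_mul]
  refine sum_congr rfl fun p hp => ?_
  rw [show g p.1 p.2 = b ^ p.1 * b ^ p.2 * _ from rfl, ← pow_add, mem_antidiagonal.1 hp, mul_comm]
  rfl

def alphaLFormula (a b L : ℕ) : ℕ :=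
  (L / 2 + 1).multichoose a * ((L + 1) / 2).multichoose b

lemma alphaLFormula_succ_left_zero (a b : ℕ) :
    alphaLFormula (a + 1) b 0 = alphaLFormula a b 0 := by
  simp [alphaLFormula]

lemma alphaLFormula_succ_right_zero (a b : ℕ) : alphaLFormula a (b + 1) 0 = 0 := by
  simp [alphaLFormula]

lemma alphaLFormula_zero_left_succ (b L : ℕ) :
    alphaLFormula 0 b (L + 1) = alphaLFormula b 0 L := by
  simp [alphaLFormula, show (L + 1 + 1) / 2 = L / 2 + 1 by omega]

lemma alphaLFormula_succ_left_succ (a b L : ℕ) :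
    alphaLFormula (a + 1) b (L + 1) = alphaLFormula a b (L + 1) + alphaLFormula b (a + 1) L := by
  rw [alphaLFormula, alphaLFormula, alphaLFormula, show (L + 1 + 1) / 2 = L / 2 + 1 by omega,
    Nat.multichoose_succ_succ]
  ring

lemma alphaLFormula_odd_comm (a b p : ℕ) :
    alphaLFormula a b (2 * p + 1) = alphaLFormula b a (2 * p + 1) := by
  rw [alphaLFormula, alphaLFormula, show (2 * p + 1 + 1) / 2 = (2 * p + 1) / 2 + 1 by omega,
    mul_comm]

lemma add_mul_alphaLFormula_even (a b p : ℕ) :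
    (b + p) * alphaLFormula a b (2 * p) = (a + p) * alphaLFormula b a (2 * p) := by
  simp only [alphaLFormula, show (2 * p + 1) / 2 = p by omega, show 2 * p / 2 = p by omega]
  rw [mul_left_comm, add_comm b, Nat.add_mul_multichoose, mul_left_comm (a + p), add_comm a,
    Nat.add_mul_multichoose]
  ring

def alphaLClosedForm (m : ℕ) (k : ℤ) (L : ℕ) : ℤ :=
  ∑ a ∈ range (m + 1), ∑ b ∈ range (m + 1),
    if a + b + L = m ∧ (a : ℤ) - b = k then (alphaLFormula a b L : ℤ) else 0

lemma alphaLClosedForm_of_add_eq {a b L m : ℕ} (h : a + b + L = m) :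
    alphaLClosedForm m (a - b) L = alphaLFormula a b L := by
  rw [alphaLClosedForm, sum_eq_single_of_mem a (by simp; omega), sum_eq_single_of_mem b
    (by simp; omega), if_pos ⟨h, rfl⟩]
  · intro b' _ hb'
    rw [if_neg (by omega)]
  · intro a' _ ha'
    exact sum_eq_zero fun b' _ => if_neg (by omega)

lemma alphaLClosedForm_eq_zero {m : ℕ} {k : ℤ} {L : ℕ}
    (h : ∀ a b : ℕ, a + b + L = m → (a : ℤ) - b ≠ k) : alphaLClosedForm m k L = 0 :=
  sum_eq_zero fun a _ => sum_eq_zero fun b _ => if_neg fun hab => h a b hab.1 hab.2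

lemma alphaLClosedForm_succ_zero (m : ℕ) (k : ℤ) :
    alphaLClosedForm (m + 1) k 0 = alphaLClosedForm m (k - 1) 0 := by
  by_cases h : ∃ a b : ℕ, a + b + 0 = m + 1 ∧ (a : ℤ) - b = k
  · obtain ⟨a, b, hab, rfl⟩ := h
    rw [alphaLClosedForm_of_add_eq hab]
    cases a with
    | zero =>
      obtain ⟨b, rfl⟩ : ∃ b', b = b' + 1 := ⟨b - 1, by omega⟩
      rw [alphaLFormula_succ_right_zero, alphaLClosedForm_eq_zero fun a' b' _ => by omega,
        Nat.cast_zero]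
    | succ a =>
      rw [show ((a + 1 : ℕ) : ℤ) - b - 1 = a - b by push_cast; ring,
        alphaLClosedForm_of_add_eq (by omega : a + b + 0 = m), alphaLFormula_succ_left_zero]
  · rw [alphaLClosedForm_eq_zero fun a b hab hk => h ⟨a, b, hab, hk⟩,
      alphaLClosedForm_eq_zero fun a b hab hk => h ⟨a + 1, b, by omega, by push_cast; omega⟩]

lemma alphaLClosedForm_succ_succ (m : ℕ) (k : ℤ) (L : ℕ) :
    alphaLClosedForm (m + 1) k (L + 1) =
      alphaLClosedForm m (k - 1) (L + 1) + alphaLClosedForm m (-k) L := by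
  by_cases h : ∃ a b : ℕ, a + b + (L + 1) = m + 1 ∧ (a : ℤ) - b = k
  · obtain ⟨a, b, hab, rfl⟩ := h
    rw [alphaLClosedForm_of_add_eq hab, neg_sub]
    cases a with
    | zero =>
      rw [alphaLClosedForm_eq_zero fun a' b' _ => by omega,
        alphaLClosedForm_of_add_eq (by omega : b + 0 + L = m), alphaLFormula_zero_left_succ,
        zero_add]
    | succ a =>
      rw [show ((a + 1 : ℕ) : ℤ) - b - 1 = a - b by push_cast; ring,
        alphaLClosedForm_of_add_eq (by omega : a + b + (L + 1) = m),
        alphaLClosedForm_of_add_eq (by omega : b + (a + 1) + L = m),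
        alphaLFormula_succ_left_succ, Nat.cast_add]
  · rw [alphaLClosedForm_eq_zero fun a b hab hk => h ⟨a, b, hab, hk⟩,
      alphaLClosedForm_eq_zero fun a b hab hk => h ⟨a + 1, b, by omega, by push_cast; omega⟩,
      alphaLClosedForm_eq_zero fun a b hab hk => h ⟨b, a, by omega, by omega⟩, add_zero]

theorem alternatingAlphaL_eq_alphaLClosedForm (m : ℕ) (k : ℤ) (L : ℕ) :
    alternatingAlphaL m k L = alphaLClosedForm m k L := by
  induction m generalizing k L with
  | zero =>
    by_cases h : k = 0 ∧ L = 0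
    · obtain ⟨rfl, rfl⟩ := h
      simp [alternatingAlphaL, alternatingAlpha, alphaLClosedForm, alphaLFormula]
    · rw [alphaLClosedForm_eq_zero fun a b hab hk => h ⟨by omega, by omega⟩,
        alternatingAlphaL_eq_sum_antidiagonal]
      refine sum_eq_zero fun p hp => if_neg ?_
      have := mem_antidiagonal.1 hp
      omega
  | succ m ih =>
    cases L with
    | zero => rw [alternatingAlphaL_succ_zero, alphaLClosedForm_succ_zero, ih]
    | succ L => rw [alternatingAlphaL_succ_succ, alphaLClosedForm_succ_succ, ih, ih]

lemma alternatingAlphaL_neg_odd (m : ℕ) (k : ℤ) (p : ℕ) :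
    alternatingAlphaL m (-k) (2 * p + 1) = alternatingAlphaL m k (2 * p + 1) := by
  simp only [alternatingAlphaL_eq_alphaLClosedForm]
  by_cases h : ∃ a b : ℕ, a + b + (2 * p + 1) = m ∧ (a : ℤ) - b = k
  · obtain ⟨a, b, hab, rfl⟩ := h
    rw [neg_sub, alphaLClosedForm_of_add_eq hab, alphaLClosedForm_of_add_eq (by omega),
      alphaLFormula_odd_comm]
  · rw [alphaLClosedForm_eq_zero fun a b hab hk => h ⟨a, b, hab, hk⟩,
      alphaLClosedForm_eq_zero fun a b hab hk => h ⟨b, a, by omega, by omega⟩]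

lemma sub_mul_alternatingAlphaL_even (m : ℕ) (k : ℤ) (p : ℕ) :
    (m - k) * alternatingAlphaL m k (2 * p) = (m + k) * alternatingAlphaL m (-k) (2 * p) := by
  simp only [alternatingAlphaL_eq_alphaLClosedForm]
  by_cases h : ∃ a b : ℕ, a + b + 2 * p = m ∧ (a : ℤ) - b = k
  · obtain ⟨a, b, rfl, rfl⟩ := h
    rw [neg_sub, alphaLClosedForm_of_add_eq rfl, alphaLClosedForm_of_add_eq (by omega)]
    have key : ((b + p) * alphaLFormula a b (2 * p) : ℤ) =
        (a + p) * alphaLFormula b a (2 * p) := mod_cast add_mul_alphaLFormula_even a b p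
    push_cast
    linear_combination 2 * key
  · rw [alphaLClosedForm_eq_zero fun a b hab hk => h ⟨a, b, hab, hk⟩,
      alphaLClosedForm_eq_zero fun a b hab hk => h ⟨b, a, by omega, by omega⟩, mul_zero,
      mul_zero]

lemma alternatingAlphaL_eq_zero_of_lt {m : ℕ} {k : ℤ} {L : ℕ} (h : (m : ℤ) < L + |k|) :
    alternatingAlphaL m k L = 0 := by
  rw [alternatingAlphaL_eq_alphaLClosedForm]
  refine alphaLClosedForm_eq_zero fun a b hab hk => ?_
  rw [← hk] at h
  cases abs_cases ((a : ℤ) - b) <;> omega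

theorem aCoeff_one_parameter_general (m k : ℕ) (hk1 : 1 ≤ k) :
    ((m + k : ℕ) : Polynomial ℤ) * aCoeff (Polynomial ℤ) m k Polynomial.X Polynomial.X =
    ((2 * k : ℕ) : Polynomial ℤ) *
      ∑ p ∈ Finset.range ((m - 1) / 2 + 1),
        ((alternatingAlphaL m (k : ℤ) (2 * p) : ℤ) : Polynomial ℤ) * Polynomial.X ^ (2 * p) := by
  have hvanish : ∀ L ≥ m, ((m + k : ℕ) : Polynomial ℤ) *
      (((alternatingAlphaL m k L - alternatingAlphaL m (-k) L : ℤ) : Polynomial ℤ) *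
        Polynomial.X ^ L) = 0 := by
    intro L hL
    rw [alternatingAlphaL_eq_zero_of_lt (by rw [Nat.abs_cast]; omega),
      alternatingAlphaL_eq_zero_of_lt (by rw [abs_neg, Nat.abs_cast]; omega)]
    simp
  rw [aCoeff_diag_eq_sum, mul_sum, eventually_constant_sum hvanish m.le_succ,
    ← eventually_constant_sum hvanish (by omega : m ≤ 2 * ((m - 1) / 2 + 1)), sum_range_two_mul,
    mul_sum]
  refine sum_congr rfl fun p _ => ?_
  have heven : ((m + k : ℕ) : ℤ) *
      (alternatingAlphaL m k (2 * p) - alternatingAlphaL m (-k) (2 * p)) =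
        (2 * k : ℕ) * alternatingAlphaL m k (2 * p) := by
    push_cast
    linear_combination sub_mul_alternatingAlphaL_even m k p
  rw [alternatingAlphaL_neg_odd, sub_self, Int.cast_zero, zero_mul, mul_zero, add_zero,
    ← mul_assoc, ← mul_assoc]
  exact_mod_cast congrArg (fun z : ℤ => (z : Polynomial ℤ) * Polynomial.X ^ (2 * p)) heven

/-- The one-parameter formula: for `1 ≤ k ≤ m` with `k ≡ m (mod 2)`, in `ℤ[β]`:
`(m+k)·a_k^{(m)}(β,β) = 2k·Σ_{p=0}^{⌊(m−1)/2⌋} β^{2p} α^{(m)}_{k,2p}`. -/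
theorem aCoeff_one_parameter (m k : ℕ) (hk1 : 1 ≤ k) (hkm : k ≤ m) (hpar : k % 2 = m % 2) :
    ((m + k : ℕ) : Polynomial ℤ) * aCoeff (Polynomial ℤ) m k Polynomial.X Polynomial.X =
    ((2 * k : ℕ) : Polynomial ℤ) *
      ∑ p ∈ Finset.range ((m - 1) / 2 + 1),
        ((alternatingAlphaL m (k : ℤ) (2 * p) : ℤ) : Polynomial ℤ) * Polynomial.X ^ (2 * p) :=
  aCoeff_one_parameter_general m k hk1
end
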